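/- Let X be uniformly distributed over {0,1}^n and let J be a random variable taking values in {0,1,...,n} (possibly correlated with X). Then H(X[1..J] | X[J+1..n]) ≥ E[J] − H(J). -/

import Mathlib

open Finset Real
open scoped Classical

/-- Probability of an event under a weight function on a finite sample space. -/
noncomputable def pr {Ω : Type*} [Fintype Ω] (μ : Ω → ℝ) (E : Ω → Prop) : ℝ :=
  ∑ ω, if E ω then μ ω else 0

/-- Shannon entropy (base 2) of a random variable on a finite probability space. -/
noncomputable def ent {Ω α : Type*} [Fintype Ω] [Fintype α]
    (μ : Ω → ℝ) (X : Ω → α) : ℝ :=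
  -∑ a : α, pr μ (fun ω => X ω = a) * Real.logb 2 (pr μ (fun ω => X ω = a))

/-- Conditional Shannon entropy H(X | Y) (base 2). -/
noncomputable def condEnt {Ω α β : Type*} [Fintype Ω] [Fintype α] [Fintype β]
    (μ : Ω → ℝ) (X : Ω → α) (Y : Ω → β) : ℝ :=
  -∑ a : α, ∑ b : β,
    pr μ (fun ω => X ω = a ∧ Y ω = b) *
      Real.logb 2 (pr μ (fun ω => X ω = a ∧ Y ω = b) / pr μ (fun ω => Y ω = b))

/-- Conditional mutual information I(X : Y | Z) = H(X|Z) - H(X|Y,Z). -/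
noncomputable def condMI {Ω α β γ : Type*} [Fintype Ω] [Fintype α] [Fintype β] [Fintype γ]
    (μ : Ω → ℝ) (X : Ω → α) (Y : Ω → β) (Z : Ω → γ) : ℝ :=
  condEnt μ X Z - condEnt μ X (fun ω => (Y ω, Z ω))

/-- Mutual information I(X : Y) = H(X) - H(X|Y). -/
noncomputable def mutInf {Ω α β : Type*} [Fintype Ω] [Fintype α] [Fintype β]
    (μ : Ω → ℝ) (X : Ω → α) (Y : Ω → β) : ℝ :=
  ent μ X - condEnt μ X Y

/-- Binary entropy function (base 2). -/
noncomputable def H2 (x : ℝ) : ℝ := -x * Real.logb 2 x - (1 - x) * Real.logb 2 (1 - x)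

/-- The prefix X[1..j] of a length-`n` bit string, encoded with `none` outside the prefix. -/
def prefOf {n : ℕ} (x : Fin n → Bool) (j : Fin (n+1)) : Fin n → Option Bool :=
  fun i => if (i : ℕ) < (j : ℕ) then some (x i) else none

/-- The suffix X[j+1..n] of a length-`n` bit string, encoded with `none` inside the prefix. -/
def suffOf {n : ℕ} (x : Fin n → Bool) (j : Fin (n+1)) : Fin n → Option Bool :=
  fun i => if (j : ℕ) ≤ (i : ℕ) then some (x i) else none

/-
Write `P`, `S` for the prefix and suffix and `p` for probabilities under `μ`. Rearranged, the claim is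
`E[log₂ t] ≤ 0` for `t = 2^J · p(J) · p(P,S) / p(S)`, which by `log x ≤ x - 1` follows from
`E[t] ≤ 1`. Since `(P, S)` determines `X`, uniformity gives `p(P,S) ≤ 2⁻ⁿ`; together with
`p(S) ≥ p(S,J)` this bounds `E[t]` by `∑_{(s,j)} 2^(j-n) p(j)` over the support of `(S,J)`. A
suffix `s` of length `n - j` that occurs at all is the suffix of `2^j` strings, so
`2^(j-n) ≤ p(suffOf X j = s)`, and the sum is at most `∑_j p(j) ∑_s p(suffOf X j = s) = 1`.
-/

section WeightedSpace

variable {Ω : Type*} [Fintype Ω] {μ : Ω → ℝ}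

lemma pr_nonneg (hpos : ∀ ω, 0 ≤ μ ω) (E : Ω → Prop) : 0 ≤ pr μ E :=
  Finset.sum_nonneg fun ω _ => by split <;> simp [hpos ω]

lemma pr_mono (hpos : ∀ ω, 0 ≤ μ ω) {E F : Ω → Prop} (h : ∀ ω, E ω → F ω) :
    pr μ E ≤ pr μ F :=
  Finset.sum_le_sum fun ω _ => by
    by_cases hE : E ω
    · simp [hE, h ω hE]
    · simp only [hE, if_false]; split <;> simp [hpos ω]

lemma pr_pos (hpos : ∀ ω, 0 ≤ μ ω) {E : Ω → Prop} {ω : Ω} (hE : E ω) (hω : 0 < μ ω) :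
    0 < pr μ E := by
  refine hω.trans_le ?_
  simpa [hE, pr] using Finset.single_le_sum (f := fun ω' => if E ω' then μ ω' else 0)
    (fun i _ => by split <;> simp [hpos i]) (Finset.mem_univ ω)

lemma sum_pr_mul {α : Type*} [Fintype α] (μ : Ω → ℝ) (Y : Ω → α) (c : α → ℝ) :
    ∑ a, pr μ (fun ω => Y ω = a) * c a = ∑ ω, μ ω * c (Y ω) := by
  simp only [pr, Finset.sum_mul, ite_mul, zero_mul]
  rw [Finset.sum_comm]
  exact Finset.sum_congr rfl fun ω _ => by simp [eq_comm]

lemma sum_pr_eq_one {α : Type*} [Fintype α] (hsum : ∑ ω, μ ω = 1) (Y : Ω → α) :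
    ∑ a, pr μ (fun ω => Y ω = a) = 1 := by
  simpa [hsum] using sum_pr_mul μ Y (fun _ => 1)

lemma pr_comp_eq_card_mul {α : Type*} [Fintype α] {X : Ω → α} {c : ℝ}
    (hX : ∀ x, pr μ (fun ω => X ω = x) = c) (E : α → Prop) [DecidablePred E] :
    pr μ (fun ω => E (X ω)) = #{x | E x} * c := by
  have h := sum_pr_mul μ X (fun x => if E x then 1 else 0)
  simp only [hX, mul_ite, mul_one, mul_zero] at h
  rw [Finset.sum_ite, Finset.sum_const_zero, add_zero, Finset.sum_const, nsmul_eq_mul] at h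
  rw [h]
  exact Finset.sum_congr rfl fun ω _ => by split <;> simp [*]

lemma sum_mul_le_sum_mul (hpos : ∀ ω, 0 ≤ μ ω) {f g : Ω → ℝ}
    (h : ∀ ω, 0 < μ ω → f ω ≤ g ω) : ∑ ω, μ ω * f ω ≤ ∑ ω, μ ω * g ω :=
  Finset.sum_le_sum fun ω _ => by
    rcases (hpos ω).eq_or_lt with h0 | h0
    · simp [← h0]
    · exact mul_le_mul_of_nonneg_left (h ω h0) h0.le

lemma sum_mul_congr (hpos : ∀ ω, 0 ≤ μ ω) {f g : Ω → ℝ}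
    (h : ∀ ω, 0 < μ ω → f ω = g ω) : ∑ ω, μ ω * f ω = ∑ ω, μ ω * g ω :=
  (sum_mul_le_sum_mul hpos fun ω hω => (h ω hω).le).antisymm
    (sum_mul_le_sum_mul hpos fun ω hω => (h ω hω).ge)

lemma sum_mul_div_pr_le {α : Type*} [Fintype α] (Y : Ω → α) {g G : α → ℝ}
    (hG : ∀ a, 0 ≤ G a) (hgG : ∀ ω, g (Y ω) ≤ G (Y ω)) :
    ∑ ω, μ ω * (g (Y ω) / pr μ (fun ω' => Y ω' = Y ω)) ≤ ∑ a, G a := by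
  rw [← sum_pr_mul μ Y (fun a => g a / pr μ (fun ω' => Y ω' = a))]
  refine Finset.sum_le_sum fun a _ => ?_
  by_cases hz : pr μ (fun ω => Y ω = a) = 0
  · simp [hz, hG a]
  · obtain ⟨ω, -, hω⟩ := Finset.exists_ne_zero_of_sum_ne_zero hz
    have hYω : Y ω = a := by_contra fun h => by simp [h] at hω
    rw [mul_div_cancel₀ _ hz, ← hYω]
    exact hgG ω

lemma sum_mul_logb_nonpos (hpos : ∀ ω, 0 ≤ μ ω) (hsum : ∑ ω, μ ω = 1) {t : Ω → ℝ}
    (ht : ∀ ω, 0 < μ ω → 0 < t ω) (hmean : ∑ ω, μ ω * t ω ≤ 1) :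
    ∑ ω, μ ω * logb 2 (t ω) ≤ 0 := by
  have hlog2 : 0 < log 2 := log_pos one_lt_two
  calc ∑ ω, μ ω * logb 2 (t ω) ≤ ∑ ω, μ ω * ((t ω - 1) / log 2) :=
        sum_mul_le_sum_mul hpos fun ω hω =>
          div_le_div_of_nonneg_right (log_le_sub_one_of_pos (ht ω hω)) hlog2.le
    _ = (∑ ω, μ ω * t ω - 1) / log 2 := by
        simp only [← mul_div_assoc, ← Finset.sum_div, mul_sub, mul_one,
          Finset.sum_sub_distrib, hsum]
    _ ≤ 0 := div_nonpos_of_nonpos_of_nonneg (by linarith) hlog2.le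

lemma ent_eq_neg_sum {α : Type*} [Fintype α] (μ : Ω → ℝ) (Y : Ω → α) :
    ent μ Y = -∑ ω, μ ω * logb 2 (pr μ (fun ω' => Y ω' = Y ω)) := by
  rw [ent, sum_pr_mul μ Y (fun a => logb 2 (pr μ fun ω => Y ω = a))]

lemma condEnt_eq_neg_sum {α β : Type*} [Fintype α] [Fintype β] (μ : Ω → ℝ)
    (X : Ω → α) (Y : Ω → β) :
    condEnt μ X Y = -∑ ω, μ ω * logb 2 (pr μ (fun ω' => X ω' = X ω ∧ Y ω' = Y ω) /
      pr μ (fun ω' => Y ω' = Y ω)) := by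
  have h := sum_pr_mul μ (fun ω => (X ω, Y ω)) fun p =>
    logb 2 (pr μ (fun ω => X ω = p.1 ∧ Y ω = p.2) / pr μ (fun ω => Y ω = p.2))
  simp only [Prod.ext_iff, Fintype.sum_prod_type] at h
  rw [condEnt, h]

end WeightedSpace

section PrefixSuffix

variable {Ω : Type*} [Fintype Ω] {n : ℕ} {μ : Ω → ℝ}

lemma eq_of_prefOf_eq_of_suffOf_eq {x y : Fin n → Bool} {j k : Fin (n+1)}
    (hp : prefOf x j = prefOf y k) (hs : suffOf x j = suffOf y k) : x = y := by
  funext i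
  have h₁ := congrFun hp i
  have h₂ := congrFun hs i
  simp only [prefOf, suffOf] at h₁ h₂
  split_ifs at h₁ h₂ <;> first | omega | simpa using h₁ | simpa using h₂

lemma two_pow_le_card_suffOf_eq (j : Fin (n+1)) (x : Fin n → Bool) :
    2 ^ (j : ℕ) ≤ #{y | suffOf y j = suffOf x j} := by
  let extend : (Fin j → Bool) → Fin n → Bool := fun f i =>
    if h : (i : ℕ) < j then f ⟨i, h⟩ else x i
  calc 2 ^ (j : ℕ) = #(univ : Finset (Fin j → Bool)) := by simp
    _ ≤ _ := by
      refine Finset.card_le_card_of_injOn extend (fun f _ => ?_) (fun f _ g _ hfg => ?_)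
      · simp only [Finset.coe_filter, Finset.mem_univ, true_and]
        funext i
        simp +contextual [extend, suffOf, not_lt.mpr]
      · funext k
        simpa [extend] using congrFun hfg ⟨k, k.2.trans_le (Nat.lt_succ_iff.mp j.2)⟩

lemma two_pow_div_le_pr_suffOf {X : Ω → Fin n → Bool}
    (hX : ∀ x : Fin n → Bool, pr μ (fun ω => X ω = x) = 1 / 2 ^ n) (j : Fin (n+1))
    (x : Fin n → Bool) :
    (2 : ℝ) ^ (j : ℕ) / 2 ^ n ≤ pr μ (fun ω => suffOf (X ω) j = suffOf x j) := by
  rw [pr_comp_eq_card_mul hX (fun y => suffOf y j = suffOf x j), div_eq_mul_one_div]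
  gcongr
  exact_mod_cast two_pow_le_card_suffOf_eq j x

lemma pr_prefOf_suffOf_div_le (hpos : ∀ ω, 0 ≤ μ ω) {X : Ω → Fin n → Bool}
    (hX : ∀ x : Fin n → Bool, pr μ (fun ω => X ω = x) = 1 / 2 ^ n) (J : Ω → Fin (n+1))
    {ω : Ω} (hω : 0 < μ ω) :
    pr μ (fun ω' => prefOf (X ω') (J ω') = prefOf (X ω) (J ω) ∧
        suffOf (X ω') (J ω') = suffOf (X ω) (J ω)) /
      pr μ (fun ω' => suffOf (X ω') (J ω') = suffOf (X ω) (J ω)) ≤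
    1 / 2 ^ n / pr μ (fun ω' => (suffOf (X ω') (J ω'), J ω') = (suffOf (X ω) (J ω), J ω)) :=
  div_le_div₀ (by positivity)
    ((pr_mono hpos fun _ h => eq_of_prefOf_eq_of_suffOf_eq h.1 h.2).trans_eq (hX _))
    (pr_pos hpos rfl hω) (pr_mono hpos fun _ h => (Prod.ext_iff.mp h).1)

lemma sum_mul_two_pow_div_pr_suffOf_le_one (hpos : ∀ ω, 0 ≤ μ ω) (hsum : ∑ ω, μ ω = 1)
    {X : Ω → Fin n → Bool} (hX : ∀ x : Fin n → Bool, pr μ (fun ω => X ω = x) = 1 / 2 ^ n)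
    (J : Ω → Fin (n+1)) :
    ∑ ω, μ ω * (2 ^ (J ω : ℕ) / 2 ^ n * pr μ (fun ω' => J ω' = J ω) /
      pr μ (fun ω' => (suffOf (X ω') (J ω'), J ω') = (suffOf (X ω) (J ω), J ω))) ≤ 1 := by
  have hG : ∑ p : (Fin n → Option Bool) × Fin (n+1),
      pr μ (fun ω => J ω = p.2) * pr μ (fun ω => suffOf (X ω) p.2 = p.1) = 1 := by
    rw [Fintype.sum_prod_type, Finset.sum_comm]
    simp only [← Finset.mul_sum, sum_pr_eq_one hsum, mul_one]
  refine (sum_mul_div_pr_le (fun ω => (suffOf (X ω) (J ω), J ω))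
    (g := fun p => 2 ^ (p.2 : ℕ) / 2 ^ n * pr μ (fun ω => J ω = p.2))
    (fun p => mul_nonneg (pr_nonneg hpos _) (pr_nonneg hpos _)) fun ω => ?_).trans_eq hG
  rw [mul_comm]
  exact mul_le_mul_of_nonneg_left (two_pow_div_le_pr_suffOf hX _ _) (pr_nonneg hpos _)

end PrefixSuffix

theorem stmt1 {Ω : Type*} [Fintype Ω] (n : ℕ) (μ : Ω → ℝ)
    (hpos : ∀ ω, 0 ≤ μ ω) (hsum : ∑ ω, μ ω = 1)
    (X : Ω → Fin n → Bool) (J : Ω → Fin (n+1))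
    (hX : ∀ x : Fin n → Bool, pr μ (fun ω => X ω = x) = 1 / 2 ^ n) :
    condEnt μ (fun ω => prefOf (X ω) (J ω)) (fun ω => suffOf (X ω) (J ω))
      ≥ (∑ ω, μ ω * ((J ω : ℕ) : ℝ)) - ent μ J := by
  set pJ : Ω → ℝ := fun ω => pr μ (fun ω' => J ω' = J ω)
  set r : Ω → ℝ := fun ω => pr μ (fun ω' => prefOf (X ω') (J ω') = prefOf (X ω) (J ω) ∧
      suffOf (X ω') (J ω') = suffOf (X ω) (J ω)) /
    pr μ (fun ω' => suffOf (X ω') (J ω') = suffOf (X ω) (J ω))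
  have hpJ : ∀ ω, 0 < μ ω → 0 < pJ ω := fun ω hω => pr_pos hpos rfl hω
  have hr : ∀ ω, 0 < μ ω → 0 < r ω := fun ω hω =>
    div_pos (pr_pos hpos ⟨rfl, rfl⟩ hω) (pr_pos hpos rfl hω)
  have hmean : ∑ ω, μ ω * (2 ^ (J ω : ℕ) * pJ ω * r ω) ≤ 1 := by
    refine (sum_mul_le_sum_mul hpos fun ω hω => ?_).trans
      (sum_mul_two_pow_div_pr_suffOf_le_one hpos hsum hX J)
    have := hpJ ω hω
    calc 2 ^ (J ω : ℕ) * pJ ω * r ω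
        ≤ 2 ^ (J ω : ℕ) * pJ ω * (1 / 2 ^ n / pr μ (fun ω' =>
            (suffOf (X ω') (J ω'), J ω') = (suffOf (X ω) (J ω), J ω))) :=
          mul_le_mul_of_nonneg_left (pr_prefOf_suffOf_div_le hpos hX J hω) (by positivity)
      _ = _ := by ring
  have hlogb : ∑ ω, μ ω * logb 2 (2 ^ (J ω : ℕ) * pJ ω * r ω) =
      ∑ ω, μ ω * ((J ω : ℕ) : ℝ) + ∑ ω, μ ω * logb 2 (pJ ω) + ∑ ω, μ ω * logb 2 (r ω) := by
    simp only [← Finset.sum_add_distrib, ← mul_add]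
    refine sum_mul_congr hpos fun ω hω => ?_
    have := hpJ ω hω
    rw [logb_mul (by positivity) (hr ω hω).ne', logb_mul (by positivity) this.ne',
      logb_pow, logb_self_eq_one one_lt_two, mul_one]
  have hgibbs := sum_mul_logb_nonpos hpos hsum
    (fun ω hω => mul_pos (mul_pos (by positivity) (hpJ ω hω)) (hr ω hω)) hmean
  rw [condEnt_eq_neg_sum, ent_eq_neg_sum]
  linarith
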